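/- Let A be an associative unital ring and let i, j ∈ A. Then for every m ≥ 1 the identity (ij−ji)^m j = (ij)^m j − (ij)^(m−1) j (ij) − Σ_{r=0}^{m−2} (ij)^r j · i(ij−ji)^(m−1−r) j holds (the sum being empty for m = 1). -/
import Mathlib


/-- For any associative unital ring `A` and any `i, j ∈ A`, for every `m ≥ 1`,
`(ij-ji)^m j = (ij)^m j - (ij)^(m-1) j (ij) - ∑_{r=0}^{m-2} (ij)^r j · i (ij-ji)^(m-1-r) j`
(the sum being empty for `m = 1`). -/
theorem commutator_power_times_j (A : Type*) [Ring A] (i j : A) (m : ℕ) (hm : 1 ≤ m) :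
    (i * j - j * i) ^ m * j =
      (i * j) ^ m * j - (i * j) ^ (m - 1) * j * (i * j)
        - ∑ r ∈ Finset.range (m - 1),
            (i * j) ^ r * j * (i * (i * j - j * i) ^ (m - 1 - r) * j) := by
  induction m, hm using Nat.le_induction with
  | base =>
    simp only [pow_one, pow_zero, Nat.sub_self, Finset.range_zero, Finset.sum_empty]
    noncomm_ring
  | succ n hn IH =>
    obtain ⟨k, rfl⟩ : ∃ k, n = k + 1 := ⟨n - 1, (Nat.succ_pred_eq_of_pos hn).symm⟩
    have hc : (i*j - j*i)^(k+1+1)*j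
        = (i*j)*((i*j-j*i)^(k+1)*j) - j*(i*((i*j-j*i)^(k+1))*j) := by
      rw [pow_succ']
      noncomm_ring
    rw [hc, IH]
    simp only [Nat.add_sub_cancel]
    rw [Finset.sum_range_succ']
    simp only [Nat.succ_sub_succ, Nat.sub_zero, pow_zero, one_mul]
    rw [mul_sub, mul_sub, Finset.mul_sum]
    have hs : ∀ r ∈ Finset.range k,
        (i*j) * ((i*j)^r * j * (i * (i*j-j*i)^(k-r) * j))
          = (i*j)^(r+1) * j * (i * (i*j-j*i)^(k-r) * j) := by
      intro r _
      rw [pow_succ']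
      noncomm_ring
    rw [Finset.sum_congr rfl hs, pow_succ' (i*j) (k+1), pow_succ' (i*j) k]
    simp only [mul_assoc]
    abel
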